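/- The infinite series (1/24) ∑_{n=1}^∞ (H_n⁴ − 6 H_n² H_n^{(2)} + 8 H_n H_n^{(3)} + 3 (H_n^{(2)})² − 6 H_n^{(4)}) / ((n+1)(n+2)) equals 1. -/

import Mathlib

/-- Generalized harmonic number `H_n^{(r)} = ∑_{j=1}^n 1/j^r`. -/
noncomputable def H (n r : ℕ) : ℝ := ∑ j ∈ Finset.range n, (1 : ℝ) / (j + 1) ^ r

/-- Riemann zeta value `ζ(s) = ∑_{n=1}^∞ 1/n^s` (as a real series). -/
noncomputable def Z (s : ℕ) : ℝ := ∑' n : ℕ, (1 : ℝ) / (n + 1) ^ s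

/-- Double zeta value `ζ(a,b) = ∑_{m>n≥1} 1/(m^a n^b)`. -/
noncomputable def Z2 (a b : ℕ) : ℝ :=
  ∑' m : ℕ, (∑ j ∈ Finset.range m, (1 : ℝ) / (j + 1) ^ b) / (m + 1) ^ a

noncomputable def P2 (n : ℕ) : ℝ := H n 1 ^ 2 - H n 2
noncomputable def P3 (n : ℕ) : ℝ := H n 1 ^ 3 - 3 * H n 1 * H n 2 + 2 * H n 3
noncomputable def P4 (n : ℕ) : ℝ :=
  H n 1 ^ 4 - 6 * H n 1 ^ 2 * H n 2 + 8 * H n 1 * H n 3 + 3 * H n 2 ^ 2 - 6 * H n 4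

noncomputable def t (n : ℕ) : ℝ := P4 (n + 1) / (((n : ℝ) + 2) * ((n : ℝ) + 3))

lemma H_succ (n r : ℕ) : H (n + 1) r = H n r + 1 / ((n : ℝ) + 1) ^ r :=
  Finset.sum_range_succ _ _

lemma H_nonneg (n r : ℕ) : 0 ≤ H n r := by
  apply Finset.sum_nonneg; intro j _; positivity

lemma nz (n : ℕ) : ((n : ℝ) + 1) ≠ 0 := by positivity

lemma H_succ1 (n : ℕ) : H (n + 1) 1 = H n 1 + 1 / ((n : ℝ) + 1) := by
  rw [H_succ, pow_one]

lemma P2_succ (n : ℕ) : P2 (n + 1) = P2 n + 2 * (1 / ((n : ℝ) + 1)) * H n 1 := by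
  simp only [P2, H_succ]
  have := nz n
  field_simp
  ring

lemma P3_succ (n : ℕ) : P3 (n + 1) = P3 n + 3 * (1 / ((n : ℝ) + 1)) * P2 n := by
  simp only [P3, P2, H_succ]
  have := nz n
  field_simp
  ring

lemma P4_succ (n : ℕ) : P4 (n + 1) = P4 n + 4 * (1 / ((n : ℝ) + 1)) * P3 n := by
  simp only [P4, P3, H_succ]
  have := nz n
  field_simp
  ring

lemma P2_bounds (n : ℕ) : 0 ≤ P2 n ∧ P2 n ≤ H n 1 ^ 2 := by
  induction n with
  | zero => simp [P2, H]
  | succ n ih =>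
    have h1 := H_nonneg n 1
    set a : ℝ := 1 / ((n : ℝ) + 1) with hadef
    have ha : (0 : ℝ) < a := by rw [hadef]; positivity
    rw [P2_succ, H_succ1]
    constructor
    · nlinarith [ih.1, mul_nonneg ha.le h1]
    · nlinarith [ih.2, sq_nonneg a]

lemma P3_bounds (n : ℕ) : 0 ≤ P3 n ∧ P3 n ≤ H n 1 ^ 3 := by
  induction n with
  | zero => simp [P3, H]
  | succ n ih =>
    have h1 := H_nonneg n 1
    set a : ℝ := 1 / ((n : ℝ) + 1) with hadef
    have ha : (0 : ℝ) < a := by rw [hadef]; positivity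
    have h2 := P2_bounds n
    rw [P3_succ, H_succ1]
    constructor
    · nlinarith [ih.1, mul_nonneg ha.le h2.1]
    · nlinarith [ih.2, mul_nonneg ha.le (sub_nonneg.mpr h2.2),
        mul_nonneg (mul_nonneg ha.le ha.le) h1, pow_nonneg ha.le 3]

lemma P4_bounds (n : ℕ) : 0 ≤ P4 n ∧ P4 n ≤ H n 1 ^ 4 := by
  induction n with
  | zero => simp [P4, H]
  | succ n ih =>
    have h1 := H_nonneg n 1
    set a : ℝ := 1 / ((n : ℝ) + 1) with hadef
    have ha : (0 : ℝ) < a := by rw [hadef]; positivity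
    have h3 := P3_bounds n
    rw [P4_succ, H_succ1]
    constructor
    · nlinarith [ih.1, mul_nonneg ha.le h3.1]
    · nlinarith [ih.2, mul_nonneg ha.le (sub_nonneg.mpr h3.2),
        mul_nonneg (mul_nonneg ha.le ha.le) (sq_nonneg (H n 1)),
        mul_nonneg (pow_nonneg ha.le 3) h1, pow_nonneg ha.le 4]

/-- Closed form for the partial sums. -/
lemma partial_sum (N : ℕ) : ∑ n ∈ Finset.range N, t n =
    24 - (P4 (N + 1) + 4 * P3 (N + 1) + 12 * P2 (N + 1) + 24 * H (N + 1) 1 + 24) /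
      ((N : ℝ) + 2) := by
  induction N with
  | zero => simp [P2, P3, P4, H]; norm_num
  | succ N ih =>
    rw [Finset.sum_range_succ, ih, t]
    have e2 := P2_succ (N + 1)
    have e3 := P3_succ (N + 1)
    have e4 := P4_succ (N + 1)
    have e1 := H_succ (N + 1) 1
    push_cast at e1 e2 e3 e4 ⊢
    rw [e1, e2, e3, e4, pow_one]
    have h2 : ((N : ℝ) + 2) ≠ 0 := by positivity
    have h3 : ((N : ℝ) + 3) ≠ 0 := by positivity
    have h12 : ((N : ℝ) + 1 + 1) ≠ 0 := by positivity
    field_simp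
    ring

lemma t_nonneg (n : ℕ) : 0 ≤ t n := by
  have := (P4_bounds (n + 1)).1
  have : (0:ℝ) < ((n : ℝ) + 2) * ((n : ℝ) + 3) := by positivity
  exact div_nonneg (P4_bounds (n + 1)).1 this.le

lemma Q_nonneg (N : ℕ) :
    0 ≤ P4 (N + 1) + 4 * P3 (N + 1) + 12 * P2 (N + 1) + 24 * H (N + 1) 1 + 24 := by
  have := (P4_bounds (N + 1)).1
  have := (P3_bounds (N + 1)).1
  have := (P2_bounds (N + 1)).1
  have := H_nonneg (N + 1) 1
  linarith

lemma H1_le_log (N : ℕ) : H (N + 1) 1 ≤ 1 + Real.log ((N : ℝ) + 1) := by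
  have hh : H (N + 1) 1 = (harmonic (N + 1) : ℝ) := by
    rw [H, harmonic]
    push_cast
    simp [one_div]
  have := harmonic_le_one_add_log (N + 1)
  rw [hh]
  refine this.trans ?_
  push_cast
  exact le_rfl

lemma Q_le (N : ℕ) :
    P4 (N + 1) + 4 * P3 (N + 1) + 12 * P2 (N + 1) + 24 * H (N + 1) 1 + 24 ≤
      65 * (2 + Real.log ((N : ℝ) + 1)) ^ 4 := by
  set B := 2 + Real.log ((N : ℝ) + 1) with hB
  have hlog : 0 ≤ Real.log ((N : ℝ) + 1) := Real.log_nonneg (by push_cast; linarith [Nat.cast_nonneg (α := ℝ) N])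
  have hB1 : (1 : ℝ) ≤ B := by rw [hB]; linarith
  have hB0 : (0 : ℝ) ≤ B := by linarith
  have h1B : H (N + 1) 1 ≤ B := by
    have := H1_le_log N
    rw [hB]; linarith
  have h1 := H_nonneg (N + 1) 1
  have p4 : P4 (N + 1) ≤ B ^ 4 := (P4_bounds (N+1)).2.trans (pow_le_pow_left₀ h1 h1B 4)
  have p3 : P3 (N + 1) ≤ B ^ 4 := by
    refine (P3_bounds (N+1)).2.trans ((pow_le_pow_left₀ h1 h1B 3).trans ?_)
    exact pow_le_pow_right₀ hB1 (by norm_num)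
  have p2 : P2 (N + 1) ≤ B ^ 4 := by
    refine (P2_bounds (N+1)).2.trans ((pow_le_pow_left₀ h1 h1B 2).trans ?_)
    exact pow_le_pow_right₀ hB1 (by norm_num)
  have pp1 : H (N + 1) 1 ≤ B ^ 4 := by
    refine h1B.trans ?_
    calc B = B ^ 1 := (pow_one B).symm
    _ ≤ B ^ 4 := pow_le_pow_right₀ hB1 (by norm_num)
  have pc : (1 : ℝ) ≤ B ^ 4 := by simpa using pow_le_pow_left₀ zero_le_one hB1 4
  linarith

lemma bound_tendsto :
    Filter.Tendsto (fun N : ℕ => 65 * (2 + Real.log ((N : ℝ) + 1)) ^ 4 / ((N : ℝ) + 2))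
      Filter.atTop (nhds 0) := by
  have hk : ∀ k : ℕ, Filter.Tendsto (fun x : ℝ => Real.log x ^ k / (1 * x + 1))
      Filter.atTop (nhds 0) := fun k => Real.tendsto_pow_log_div_mul_add_atTop 1 1 k one_ne_zero
  have hg : Filter.Tendsto (fun x : ℝ => 65 * (2 + Real.log x) ^ 4 / (x + 1))
      Filter.atTop (nhds 0) := by
    have hsum := ((((((hk 0).const_mul 1040).add ((hk 1).const_mul 2080)).add
      ((hk 2).const_mul 1560)).add ((hk 3).const_mul 520)).add ((hk 4).const_mul 65))
    simp only [mul_zero, add_zero, zero_add] at hsum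
    refine hsum.congr fun x => ?_
    have hx : (1 * x + 1) = x + 1 := by ring
    rw [hx]
    by_cases h : x + 1 = 0
    · simp [div_eq_mul_inv, h]
    · field_simp
      ring
  have hcomp : Filter.Tendsto (fun N : ℕ => (N : ℝ) + 1) Filter.atTop Filter.atTop :=
    Filter.tendsto_atTop_add_const_right _ 1 tendsto_natCast_atTop_atTop
  have := hg.comp hcomp
  refine this.congr fun N => ?_
  simp only [Function.comp]
  ring_nf

lemma tsum_t : (∑' n : ℕ, t n) = 24 := by
  have hsummable : Summable t := by
    apply summable_of_sum_range_le (c := 24) t_nonneg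
    intro n
    rw [partial_sum]
    have h2 : (0:ℝ) < (n : ℝ) + 2 := by positivity
    have := Q_nonneg n
    have : 0 ≤ (P4 (n + 1) + 4 * P3 (n + 1) + 12 * P2 (n + 1) + 24 * H (n + 1) 1 + 24) /
      ((n : ℝ) + 2) := div_nonneg this h2.le
    linarith
  have htend : Filter.Tendsto (fun N => ∑ n ∈ Finset.range N, t n) Filter.atTop (nhds 24) := by
    have hzero : Filter.Tendsto (fun N : ℕ =>
        (P4 (N + 1) + 4 * P3 (N + 1) + 12 * P2 (N + 1) + 24 * H (N + 1) 1 + 24) /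
          ((N : ℝ) + 2)) Filter.atTop (nhds 0) := by
      apply squeeze_zero_norm _ bound_tendsto
      intro N
      have h2 : (0:ℝ) < (N : ℝ) + 2 := by positivity
      rw [Real.norm_eq_abs, abs_div, abs_of_nonneg (Q_nonneg N), abs_of_pos h2]
      exact div_le_div_of_nonneg_right (Q_le N) h2.le
    have := (tendsto_const_nhds (x := (24:ℝ)) (f := Filter.atTop)).sub hzero
    simp only [sub_zero] at this
    exact this.congr fun N => (partial_sum N).symm
  exact tendsto_nhds_unique hsummable.hasSum.tendsto_sum_nat htend

theorem stmt5 :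
    (1 / 24 : ℝ) * ∑' n : ℕ,
      (H (n + 1) 1 ^ 4 - 6 * H (n + 1) 1 ^ 2 * H (n + 1) 2 + 8 * H (n + 1) 1 * H (n + 1) 3 +
          3 * H (n + 1) 2 ^ 2 - 6 * H (n + 1) 4) /
        (((n : ℝ) + 2) * ((n : ℝ) + 3)) = 1 := by
  have h : (∑' n : ℕ,
      (H (n + 1) 1 ^ 4 - 6 * H (n + 1) 1 ^ 2 * H (n + 1) 2 + 8 * H (n + 1) 1 * H (n + 1) 3 +
          3 * H (n + 1) 2 ^ 2 - 6 * H (n + 1) 4) /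
        (((n : ℝ) + 2) * ((n : ℝ) + 3))) = ∑' n : ℕ, t n := rfl
  rw [h, tsum_t]
  norm_num
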